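/- Let G be a non-complete 3-regular (cubic) finite simple graph of order n. Then gp(μ(G)) ≥ n + 1 if and only if G is isomorphic to the graph G(3), defined as follows: take disjoint vertex sets V1 = {u1,u2,u3}, V2 = {v1,v2,v3}, V4 = {w1,w2}; add all edges between V1 and V4; make V2 a triangle; and add the matching edges u_i v_i for i = 1,2,3. -/

import Mathlib

/-!
Let `S` be a general position set of `μ(G)` with more than `n` vertices. Distances in `μ(G)`
between an original vertex and an original (resp. twin) vertex are at least the `G`-distance
capped at `4` (resp. `3`), so paths through the root are geodesics once the `G`-distance is large.
This rules out the root in `S`, and then the set `C` of vertices with both copies in `S` is larger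
than the set `D` of vertices with no copy in `S`. Geodesics of length two show that `C` is
independent, that its neighbours have no original in `S`, that an original in `S` has at most one
neighbour with twin in `S`, and that two vertices of `C` have their common neighbours in `D`.
Counting the edges between `C` and `D` in the cubic graph `G` gives at least three vertices of `C`
with a twin-neighbour; these twin-neighbours are within distance two of each other, and counting
them against the free neighbours of `D` shows that every neighbour of `D` lies in `C`, `|C| = 3`
and `|D| = 2`. From there `G` is forced to be `G(3)`. Conversely, in `μ(G(3))` the originals and
twins of `V₁` with the twins of `V₂` are pairwise at distance at most two and each has at most one
neighbour among them, so they form a general position set of size `9 = n + 1`.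
-/

open SimpleGraph

variable {V : Type*}

/-- The Mycielskian of a graph `G`: vertices are `some (Sum.inl v)` (original vertices),
`some (Sum.inr v)` (twin vertices), and `none` (the root `u*`). -/
def Mycielskian (G : SimpleGraph V) : SimpleGraph (Option (V ⊕ V)) :=
  SimpleGraph.fromRel (fun x y =>
    (∃ u v, G.Adj u v ∧ x = some (Sum.inl u) ∧ y = some (Sum.inl v)) ∨
    (∃ u v, G.Adj u v ∧ x = some (Sum.inl u) ∧ y = some (Sum.inr v)) ∨
    (∃ u, x = some (Sum.inr u) ∧ y = none))

/-- `S` is a general position set: no shortest path between two vertices of `S`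
contains a third element of `S`. -/
def IsGPSet (G : SimpleGraph V) (S : Set V) : Prop :=
  ∀ u ∈ S, ∀ v ∈ S, ∀ p : G.Walk u v, p.length = G.dist u v →
    ∀ w ∈ S, w ∈ p.support → w = u ∨ w = v

/-- The general position number of `G`: the maximum cardinality of a general position set. -/
noncomputable def gpNumber (G : SimpleGraph V) [Fintype V] : ℕ :=
  sSup {k | ∃ S : Set V, IsGPSet G S ∧ S.ncard = k}

/-- A gp-set: a general position set of maximum cardinality. -/
def IsGpSet (G : SimpleGraph V) [Fintype V] (S : Set V) : Prop :=
  IsGPSet G S ∧ S.ncard = gpNumber G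

/-- `G` is a `d`-regular graph: every vertex has degree `d`. -/
def IsRegularDeg (G : SimpleGraph V) (d : ℕ) : Prop :=
  ∀ v : V, (G.neighborSet v).ncard = d

/-- The graph `G(d)`: vertex sets `V1 = Fin d` (left), `V2 = Fin d` (middle) and
`V4 = Fin (d-1)` (right); all edges between `V1` and `V4`, `V2` a clique, and a
perfect matching between `V1` and `V2`. -/
def Gd (d : ℕ) : SimpleGraph (Fin d ⊕ (Fin d ⊕ Fin (d - 1))) :=
  SimpleGraph.fromRel (fun x y =>
    (∃ i j, x = Sum.inl i ∧ y = Sum.inr (Sum.inr j)) ∨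
    (∃ i j, x = Sum.inr (Sum.inl i) ∧ y = Sum.inr (Sum.inl j)) ∨
    (∃ i, x = Sum.inl i ∧ y = Sum.inr (Sum.inl i)))

open Finset

section GeneralPosition

variable {W : Type*} {H : SimpleGraph W} {S : Set W} {a b m : W}

lemma SimpleGraph.two_le_edist (hab : a ≠ b) (hnadj : ¬H.Adj a b) : 2 ≤ H.edist a b := by
  by_contra! h
  rcases edist_le_one_iff_adj_or_eq.mp (Order.le_of_lt_succ h) with h | h
  exacts [hnadj h, hab h]

lemma SimpleGraph.exists_adj_adj_of_edist_le_two (h : H.edist a b ≤ 2) (hab : a ≠ b)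
    (hnadj : ¬H.Adj a b) : ∃ m, H.Adj a m ∧ H.Adj m b := by
  by_contra! hno
  refine h.not_gt (two_lt_edist_iff.mpr ⟨hab, hnadj, Set.eq_empty_of_forall_notMem fun m hm => ?_⟩)
  rw [mem_commonNeighbors] at hm
  exact hno m hm.1 hm.2.symm

lemma SimpleGraph.Walk.length_eq_dist_of_length_le_edist (p : H.Walk a b)
    (hp : p.length ≤ H.edist a b) : p.length = H.dist a b := by
  have h := p.reachable.coe_dist_eq_edist
  exact_mod_cast (le_antisymm hp p.edist_le).trans h.symm

lemma IsGPSet.eq_or_eq_of_mem_support (hS : IsGPSet H S) (ha : a ∈ S) (hb : b ∈ S)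
    (p : H.Walk a b) (hp : p.length ≤ H.edist a b) (hm : m ∈ S) (hmp : m ∈ p.support) :
    m = a ∨ m = b :=
  hS a ha b hb p (p.length_eq_dist_of_length_le_edist hp) m hm hmp

lemma IsGPSet.notMem_of_adj_of_adj (hS : IsGPSet H S) (ha : a ∈ S) (hb : b ∈ S) (hab : a ≠ b)
    (hnadj : ¬H.Adj a b) (ham : H.Adj a m) (hmb : H.Adj m b) : m ∉ S := fun hm => by
  rcases hS.eq_or_eq_of_mem_support ha hb (.cons ham (.cons hmb .nil))
      (by simpa using two_le_edist hab hnadj) hm (by simp) with rfl | rfl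
  exacts [ham.ne rfl, hmb.ne rfl]

lemma IsGPSet.of_edist_le_two (hd : ∀ a ∈ S, ∀ b ∈ S, H.edist a b ≤ 2)
    (hm : ∀ m ∈ S, ∀ a ∈ S, ∀ b ∈ S, H.Adj m a → H.Adj m b → a = b) : IsGPSet H S := by
  intro a ha b hb p hp m hmS hmp
  have hlen : p.length ≤ 2 := by
    have h := hd a ha b hb
    rw [← p.reachable.coe_dist_eq_edist, ← hp] at h
    exact_mod_cast h
  match p, hlen with
  | .nil, _ => simp_all
  | .cons _ .nil, _ => simp_all
  | .cons h₁ (.cons h₂ .nil), _ =>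
    simp only [Walk.support_cons, Walk.support_nil, List.mem_cons, List.not_mem_nil,
      or_false] at hmp
    rcases hmp with rfl | rfl | rfl
    · exact .inl rfl
    · obtain rfl := hm m hmS a ha b hb h₁.symm h₂
      simp at hp
    · exact .inr rfl

lemma IsGPSet.ncard_le_gpNumber [Fintype W] (hS : IsGPSet H S) : S.ncard ≤ gpNumber H :=
  le_csSup ⟨Nat.card W, by rintro _ ⟨T, -, rfl⟩; exact T.ncard_le_card⟩ ⟨S, hS, rfl⟩

lemma exists_isGPSet_ncard_eq_gpNumber [Fintype W] : ∃ S, IsGPSet H S ∧ S.ncard = gpNumber H :=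
  Nat.sSup_mem (s := {k | ∃ S, IsGPSet H S ∧ S.ncard = k}) ⟨0, ∅, by simp [IsGPSet], by simp⟩
    ⟨Nat.card W, by rintro _ ⟨T, -, rfl⟩; exact T.ncard_le_card⟩

end GeneralPosition

section RegularGraphs

variable {W W' : Type*} [Fintype W] {G : SimpleGraph W} [DecidableRel G.Adj]

lemma IsRegularDeg.isRegularOfDegree {d : ℕ} (h : IsRegularDeg G d) : G.IsRegularOfDegree d :=
  fun v => by
    rw [← card_neighborSet_eq_degree, ← h v, Set.ncard_eq_toFinset_card', Set.toFinset_card]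

lemma SimpleGraph.card_filter_adj_add_card_filter_compl_adj [DecidableEq W] (T : Finset W)
    (d : W) : #{w ∈ T | G.Adj d w} + #{w ∈ Tᶜ | G.Adj d w} = G.degree d := by
  rw [← card_union_of_disjoint (disjoint_filter_filter disjoint_compl_right), ← filter_union,
    union_compl, ← card_neighborFinset_eq_degree]
  congr 1
  ext
  simp

lemma SimpleGraph.IsRegularOfDegree.sum_card_filter_adj_add_sum_card_filter_compl_adj
    [DecidableEq W] {k : ℕ} (hG : G.IsRegularOfDegree k) (T U : Finset W) :
    ∑ t ∈ T, #{u ∈ U | G.Adj t u} + ∑ u ∈ U, #{w ∈ Tᶜ | G.Adj u w} = k * #U := by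
  have := sum_card_bipartiteAbove_eq_sum_card_bipartiteBelow (s := T) (t := U) (r := G.Adj)
  simp only [bipartiteAbove, bipartiteBelow] at this
  rw [this, ← sum_add_distrib, sum_const_nat fun u _ => ?_, mul_comm]
  rw [← hG.degree_eq u, ← G.card_filter_adj_add_card_filter_compl_adj T u]
  simp only [G.adj_comm _ u]

variable [Fintype W'] {H : SimpleGraph W'} [DecidableRel H.Adj]

lemma SimpleGraph.Hom.adj_iff_exists_of_injective (f : H →g G) (hf : Function.Injective f)
    (hdeg : ∀ a, G.degree (f a) ≤ H.degree a) {a : W'} {y : W} :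
    G.Adj (f a) y ↔ ∃ b, H.Adj a b ∧ f b = y := by
  refine ⟨fun h => ?_, by rintro ⟨b, hab, rfl⟩; exact f.map_adj hab⟩
  have hsub : (H.neighborFinset a).map ⟨f, hf⟩ ⊆ G.neighborFinset (f a) := by
    intro y hy
    obtain ⟨b, hb, rfl⟩ := mem_map.mp hy
    exact (mem_neighborFinset ..).mpr (f.map_adj ((mem_neighborFinset ..).mp hb))
  have heq := eq_of_subset_of_card_le hsub (by simpa using hdeg a)
  obtain ⟨b, hb, rfl⟩ := mem_map.mp (heq ▸ (mem_neighborFinset ..).mpr h)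
  exact ⟨b, (mem_neighborFinset ..).mp hb, rfl⟩

lemma SimpleGraph.Hom.nonempty_iso_of_injective (f : H →g G) (hf : Function.Injective f)
    (hdeg : ∀ a, G.degree (f a) ≤ H.degree a) (a₀ : W') (hreach : ∀ y, G.Reachable (f a₀) y) :
    Nonempty (H ≃g G) := by
  have hclosed : ∀ x y, G.Adj x y → x ∈ Set.range f → y ∈ Set.range f := by
    rintro _ y h ⟨a, rfl⟩
    obtain ⟨b, -, rfl⟩ := (f.adj_iff_exists_of_injective hf hdeg).mp h
    exact ⟨b, rfl⟩
  have hsurj : Function.Surjective f := fun y => by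
    suffices ∀ x (p : G.Walk x y), x ∈ Set.range f → y ∈ Set.range f from
      this _ (hreach y).some ⟨a₀, rfl⟩
    intro x p
    induction p with
    | nil => exact id
    | cons h _ ih => exact fun hx => ih (hclosed _ _ h hx)
  refine ⟨{ Equiv.ofBijective f ⟨hf, hsurj⟩ with map_rel_iff' := fun {a b} => ?_ }⟩
  change G.Adj (f a) (f b) ↔ H.Adj a b
  simp only [f.adj_iff_exists_of_injective hf hdeg, hf.eq_iff, exists_eq_right]

end RegularGraphs

namespace Gd

variable {d : ℕ} {i j : Fin d} {k l : Fin (d - 1)}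

@[simp] lemma not_adj_inl_inl : ¬(Gd d).Adj (.inl i) (.inl j) := by simp [Gd]

@[simp] lemma adj_inl_inr_inl : (Gd d).Adj (.inl i) (.inr (.inl j)) ↔ i = j := by
  simp [Gd, eq_comm]

@[simp] lemma adj_inr_inl_inl : (Gd d).Adj (.inr (.inl i)) (.inl j) ↔ i = j := by simp [Gd]

@[simp] lemma adj_inl_inr_inr : (Gd d).Adj (.inl i) (.inr (.inr k)) := by simp [Gd]

@[simp] lemma adj_inr_inr_inl : (Gd d).Adj (.inr (.inr k)) (.inl i) := by simp [Gd]

@[simp] lemma adj_inr_inl_inr_inl : (Gd d).Adj (.inr (.inl i)) (.inr (.inl j)) ↔ i ≠ j := by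
  simp [Gd]

@[simp] lemma not_adj_inr_inl_inr_inr : ¬(Gd d).Adj (.inr (.inl i)) (.inr (.inr k)) := by
  simp [Gd]

@[simp] lemma not_adj_inr_inr_inr_inl : ¬(Gd d).Adj (.inr (.inr k)) (.inr (.inl i)) := by
  simp [Gd]

@[simp] lemma not_adj_inr_inr_inr_inr : ¬(Gd d).Adj (.inr (.inr k)) (.inr (.inr l)) := by
  simp [Gd]

instance : DecidableRel (Gd d).Adj
  | .inl _, .inl _ => .isFalse not_adj_inl_inl
  | .inl _, .inr (.inl _) => decidable_of_iff _ adj_inl_inr_inl.symm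
  | .inl _, .inr (.inr _) => .isTrue adj_inl_inr_inr
  | .inr (.inl _), .inl _ => decidable_of_iff _ adj_inr_inl_inl.symm
  | .inr (.inl _), .inr (.inl _) => decidable_of_iff _ adj_inr_inl_inr_inl.symm
  | .inr (.inl _), .inr (.inr _) => .isFalse not_adj_inr_inl_inr_inr
  | .inr (.inr _), .inl _ => .isTrue adj_inr_inr_inl
  | .inr (.inr _), .inr (.inl _) => .isFalse not_adj_inr_inr_inr_inl
  | .inr (.inr _), .inr (.inr _) => .isFalse not_adj_inr_inr_inr_inr

lemma degree_three : ∀ a, (Gd 3).degree a = 3 := by decide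

def hom {W : Type*} {G : SimpleGraph W} (U X : Fin d → W) (R : Fin (d - 1) → W)
    (hUX : ∀ i, G.Adj (U i) (X i)) (hUR : ∀ i k, G.Adj (U i) (R k))
    (hXX : ∀ i j, i ≠ j → G.Adj (X i) (X j)) : Gd d →g G where
  toFun := Sum.elim U (Sum.elim X R)
  map_rel' := by
    rintro (i | i | k) (j | j | l) h <;> simp at h
    · exact h ▸ hUX i
    · exact hUR i l
    · exact h ▸ (hUX j).symm
    · exact hXX i j h
    · exact (hUR j k).symm

end Gd

namespace Mycielskian

variable {G : SimpleGraph V}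

abbrev orig (v : V) : Option (V ⊕ V) := some (.inl v)

abbrev twin (v : V) : Option (V ⊕ V) := some (.inr v)

@[simp] lemma adj_orig_orig {u v : V} : (Mycielskian G).Adj (orig u) (orig v) ↔ G.Adj u v := by
  simp [Mycielskian, G.adj_comm v u]
  grind [G.ne_of_adj]

@[simp] lemma adj_orig_twin {u v : V} : (Mycielskian G).Adj (orig u) (twin v) ↔ G.Adj u v := by
  simp [Mycielskian]

@[simp] lemma adj_twin_orig {u v : V} : (Mycielskian G).Adj (twin u) (orig v) ↔ G.Adj u v := by
  simp [Mycielskian, G.adj_comm v u]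

@[simp] lemma not_adj_twin_twin {u v : V} : ¬(Mycielskian G).Adj (twin u) (twin v) := by
  simp [Mycielskian]

@[simp] lemma adj_twin_root {u : V} : (Mycielskian G).Adj (twin u) none := by
  simp [Mycielskian]

@[simp] lemma adj_root_twin {u : V} : (Mycielskian G).Adj none (twin u) := by
  simp [Mycielskian]

@[simp] lemma not_adj_orig_root {u : V} : ¬(Mycielskian G).Adj (orig u) none := by
  simp [Mycielskian]

@[simp] lemma not_adj_root_orig {u : V} : ¬(Mycielskian G).Adj none (orig u) := by
  simp [Mycielskian]

def origHom : G →g Mycielskian G where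
  toFun := orig
  map_rel' := adj_orig_orig.mpr

lemma adj_elim_of_adj {s t : V ⊕ V} (h : (Mycielskian G).Adj (some s) (some t)) :
    G.Adj (s.elim id id) (t.elim id id) := by
  rcases s with s | s <;> rcases t with t | t <;> simp_all [G.adj_comm s t]

lemma edist_elim_le_length {a b : Option (V ⊕ V)} (p : (Mycielskian G).Walk a b) {s t : V ⊕ V}
    (ha : a = some s) (hb : b = some t) (hp : none ∉ p.support) :
    G.edist (s.elim id id) (t.elim id id) ≤ p.length := by
  induction p generalizing s with
  | nil => cases ha.symm.trans hb; simp
  | @cons a c b h p ih =>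
    subst ha
    cases c with
    | none => exact absurd (by simp) hp
    | some c =>
    calc G.edist (s.elim id id) (t.elim id id)
        ≤ G.edist (s.elim id id) (c.elim id id) + G.edist (c.elim id id) (t.elim id id) :=
          G.edist_triangle
      _ ≤ 1 + p.length := by
          gcongr
          · exact (edist_eq_one_iff_adj.mpr (adj_elim_of_adj h)).le
          · exact ih rfl hb fun hn => hp (by simp [hn])
      _ = (Walk.cons h p).length := by simp [add_comm]

lemma edist_add_edist_le_length {a b : Option (V ⊕ V)} (p : (Mycielskian G).Walk a b)
    (hp : none ∈ p.support) :
    (Mycielskian G).edist a none + (Mycielskian G).edist none b ≤ p.length := by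
  classical
  rw [← p.take_spec hp, Walk.length_append, Nat.cast_add]
  exact add_le_add (Walk.edist_le _) (Walk.edist_le _)

lemma min_edist_le_edist_orig_orig (x y : V) :
    min (G.edist x y) 4 ≤ (Mycielskian G).edist (orig x) (orig y) := by
  refine le_sInf ?_
  rintro _ ⟨p, rfl⟩
  by_cases hp : none ∈ p.support
  · calc min (G.edist x y) 4 ≤ 2 + 2 := min_le_right _ _
      _ ≤ _ := add_le_add (two_le_edist (by simp) (by simp)) (two_le_edist (by simp) (by simp))
      _ ≤ p.length := edist_add_edist_le_length p hp
  · exact (min_le_left _ _).trans (edist_elim_le_length p rfl rfl hp)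

lemma min_edist_le_edist_orig_twin (x y : V) :
    min (G.edist x y) 3 ≤ (Mycielskian G).edist (orig x) (twin y) := by
  refine le_sInf ?_
  rintro _ ⟨p, rfl⟩
  by_cases hp : none ∈ p.support
  · calc min (G.edist x y) 3 ≤ 2 + 1 := min_le_right _ _
      _ ≤ _ := add_le_add (two_le_edist (by simp) (by simp))
              (Order.one_le_iff_pos.mpr (edist_pos_of_ne (by simp)))
      _ ≤ p.length := edist_add_edist_le_length p hp
  · exact (min_le_left _ _).trans (edist_elim_le_length p rfl rfl hp)

lemma edist_twin_twin_le_two (x y : V) : (Mycielskian G).edist (twin x) (twin y) ≤ 2 :=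
  (Walk.cons adj_twin_root (.cons adj_root_twin .nil)).edist_le

lemma edist_orig_orig_le_two {x m y : V} (hxm : G.Adj x m) (hmy : G.Adj m y) :
    (Mycielskian G).edist (orig x) (orig y) ≤ 2 :=
  (Walk.cons (adj_orig_orig.mpr hxm) (.cons (adj_orig_orig.mpr hmy) .nil)).edist_le

lemma edist_orig_twin_le_two {x m y : V} (hxm : G.Adj x m) (hmy : G.Adj m y) :
    (Mycielskian G).edist (orig x) (twin y) ≤ 2 :=
  (Walk.cons (adj_orig_orig.mpr hxm) (.cons (adj_orig_twin.mpr hmy) .nil)).edist_le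

section Parts

variable [Fintype V] (S : Set (Option (V ⊕ V)))

open Classical in
noncomputable def origPart : Finset V := {v | orig v ∈ S}

open Classical in
noncomputable def twinPart : Finset V := {v | twin v ∈ S}

open Classical in
noncomputable def doubled : Finset V := origPart S ∩ twinPart S

open Classical in
noncomputable def missed : Finset V := (origPart S ∪ twinPart S)ᶜ

open Classical in
noncomputable def linked (G : SimpleGraph V) : Finset V :=
  {z ∈ doubled S | ∃ x, twin x ∈ S ∧ G.Adj z x}

variable {S} {v : V}

@[simp] lemma mem_origPart : v ∈ origPart S ↔ orig v ∈ S := by simp [origPart]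

@[simp] lemma mem_twinPart : v ∈ twinPart S ↔ twin v ∈ S := by simp [twinPart]

@[simp] lemma mem_doubled : v ∈ doubled S ↔ orig v ∈ S ∧ twin v ∈ S := by simp [doubled]

@[simp] lemma mem_missed : v ∈ missed S ↔ orig v ∉ S ∧ twin v ∉ S := by simp [missed]

@[simp] lemma mem_linked : v ∈ linked S G ↔ v ∈ doubled S ∧ ∃ x, twin x ∈ S ∧ G.Adj v x := by
  simp [linked]

lemma linked_subset_doubled : linked S G ⊆ doubled S := fun _ hz => (mem_linked.mp hz).1

lemma ncard_le_card_origPart_add_card_twinPart_add_one :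
    S.ncard ≤ #(origPart S) + #(twinPart S) + 1 := by
  classical
  calc S.ncard ≤ #((origPart S).image orig ∪ (twinPart S).image twin ∪ {none}) := by
        refine (Set.ncard_le_ncard ?_ (Finset.finite_toSet _)).trans_eq (Set.ncard_coe_finset _)
        rintro (_ | (v | v)) hv <;> simp [hv]
    _ ≤ #(origPart S) + #(twinPart S) + 1 := by
        grw [card_union_le, card_union_le, card_image_le, card_image_le, card_singleton]

lemma ncard_le_card_origPart_add_card_twinPart (hroot : none ∉ S) :
    S.ncard ≤ #(origPart S) + #(twinPart S) := by
  classical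
  calc S.ncard ≤ #((origPart S).image orig ∪ (twinPart S).image twin) := by
        refine (Set.ncard_le_ncard ?_ (Finset.finite_toSet _)).trans_eq (Set.ncard_coe_finset _)
        rintro (_ | (v | v)) hv <;> simp_all
    _ ≤ #(origPart S) + #(twinPart S) := by
        grw [card_union_le, card_image_le, card_image_le]

lemma card_missed_add_one_le_card_doubled (hroot : none ∉ S)
    (hcard : Fintype.card V + 1 ≤ S.ncard) : #(missed S) + 1 ≤ #(doubled S) := by
  classical
  have h₁ := card_union_add_card_inter (origPart S) (twinPart S)
  have h₂ := card_compl_add_card (origPart S ∪ twinPart S)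
  have h₃ := ncard_le_card_origPart_add_card_twinPart hroot
  rw [missed, doubled]
  omega

end Parts

section MycielskianGP

variable {S : Set (Option (V ⊕ V))} {t u v w x y z : V}

lemma _root_.IsGPSet.eq_of_adj_of_adj_twin (hS : IsGPSet (Mycielskian G) S) (hz : orig z ∈ S)
    (hx : twin x ∈ S) (hy : twin y ∈ S) (hzx : G.Adj z x) (hzy : G.Adj z y) : x = y := by
  by_contra hxy
  exact hS.notMem_of_adj_of_adj hx hy (by simpa) (by simp) (by simpa using hzx.symm)
    (by simpa using hzy) hz

lemma _root_.IsGPSet.root_notMem_of_twin_mem (hS : IsGPSet (Mycielskian G) S)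
    (hx : twin x ∈ S) (hy : twin y ∈ S) (hxy : x ≠ y) : none ∉ S :=
  hS.notMem_of_adj_of_adj hx hy (by simpa) (by simp) adj_twin_root adj_root_twin

lemma _root_.IsGPSet.twin_notMem_of_root_mem (hS : IsGPSet (Mycielskian G) S)
    (hu : orig u ∈ S) (hroot : none ∈ S) (huw : G.Adj u w) : twin w ∉ S :=
  hS.notMem_of_adj_of_adj hu hroot (by simp) (by simp) (by simpa) adj_twin_root

lemma _root_.IsGPSet.edist_le_two_of_twin_mem (hS : IsGPSet (Mycielskian G) S)
    (hz : orig z ∈ S) (hx : twin x ∈ S) (hzx : G.Adj z x) (hy : twin y ∈ S) :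
    G.edist z y ≤ 2 := by
  by_contra! h
  have hlen : (3 : ℕ∞) ≤ (Mycielskian G).edist (orig z) (twin y) :=
    (le_min (Order.add_one_le_of_lt h) le_rfl).trans (min_edist_le_edist_orig_twin z y)
  rcases hS.eq_or_eq_of_mem_support hz hy
      (.cons (adj_orig_twin.mpr hzx) (.cons adj_twin_root (.cons adj_root_twin .nil)))
      (by simpa using hlen) hx (by simp) with h' | h'
  · simp at h'
  · cases h'
    exact (two_lt_edist_iff.mp h).2.1 hzx

lemma _root_.IsGPSet.edist_le_three_of_orig_mem (hS : IsGPSet (Mycielskian G) S)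
    (hz : orig z ∈ S) (hx : twin x ∈ S) (hzx : G.Adj z x) (hu : orig u ∈ S) (huy : G.Adj u y) :
    G.edist z u ≤ 3 := by
  by_contra! h
  have hlen : (4 : ℕ∞) ≤ (Mycielskian G).edist (orig z) (orig u) :=
    (le_min (Order.add_one_le_of_lt h) le_rfl).trans (min_edist_le_edist_orig_orig z u)
  have := hS.eq_or_eq_of_mem_support hz hu
    (.cons (adj_orig_twin.mpr hzx) (.cons adj_twin_root (.cons adj_root_twin
      (.cons (adj_twin_orig.mpr huy.symm) .nil)))) (by simpa using hlen) hx (by simp)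
  simp at this

lemma _root_.IsGPSet.orig_notMem_of_two_lt_edist (hS : IsGPSet (Mycielskian G) S)
    (hu : orig u ∈ S) (hv : twin v ∈ S) (huv : 2 < G.edist u v) (huw : G.Adj u w)
    (hwy : G.Adj w y) (hyv : G.Adj y v) : orig y ∉ S := fun hy => by
  have hlen : (3 : ℕ∞) ≤ (Mycielskian G).edist (orig u) (twin v) :=
    (le_min (Order.add_one_le_of_lt huv) le_rfl).trans (min_edist_le_edist_orig_twin u v)
  rcases hS.eq_or_eq_of_mem_support hu hv
      (.cons (adj_orig_orig.mpr huw) (.cons (adj_orig_orig.mpr hwy)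
        (.cons (adj_orig_twin.mpr hyv) .nil))) (by simpa using hlen) hy (by simp) with h | h
  · cases h
    exact (two_lt_edist_iff.mp huv).2.1 hyv
  · simp at h

lemma _root_.IsGPSet.root_notMem_of_forall_orig_mem (hS : IsGPSet (Mycielskian G) S)
    (horig : ∀ v, orig v ∈ S) (hG : G ≠ ⊤) (hnbr : ∀ v, ∃ w, G.Adj v w) : none ∉ S := by
  intro hroot
  obtain ⟨x, y, hxy, hnadj⟩ : ∃ x y, x ≠ y ∧ ¬G.Adj x y := by
    by_contra! h
    exact hG (by ext x y; exact ⟨Adj.ne, h x y⟩)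
  by_cases hxy3 : G.edist x y ≤ 3
  · -- a shortest path of length 2 or 3 is also a geodesic of `μ(G)`, through an original vertex
    obtain ⟨k, hk⟩ := ENat.ne_top_iff_exists.mp (ne_top_of_le_ne_top (by simp) hxy3)
    obtain ⟨q, hq⟩ := exists_walk_of_edist_eq_coe hk.symm
    have h2 : 2 ≤ q.length := by exact_mod_cast hq ▸ hk ▸ two_le_edist hxy hnadj
    have hx1 : G.Adj x (q.getVert 1) := by simpa using q.adj_getVert_succ (i := 0) (by omega)
    have hlen : (q.map origHom).length ≤ (Mycielskian G).edist (orig x) (orig y) := by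
      refine le_trans ?_ (min_edist_le_edist_orig_orig x y)
      rw [Walk.length_map, hq, hk]
      exact le_min le_rfl (hxy3.trans (by norm_num))
    rcases hS.eq_or_eq_of_mem_support (horig x) (horig y) _ hlen (horig (q.getVert 1))
        (by simp [Walk.support_map, origHom, q.getVert_mem_support]) with h | h
    · exact hx1.ne (by simpa using h.symm)
    · simp only [Option.some.injEq, Sum.inl.injEq] at h
      exact hnadj (h ▸ hx1)
  · obtain ⟨w, hxw⟩ := hnbr x
    obtain ⟨z, hyz⟩ := hnbr y
    have hlen : (4 : ℕ∞) ≤ (Mycielskian G).edist (orig x) (orig y) :=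
      (le_min (Order.add_one_le_of_lt (not_le.mp hxy3)) le_rfl).trans
        (min_edist_le_edist_orig_orig x y)
    have := hS.eq_or_eq_of_mem_support (horig x) (horig y)
      (.cons (adj_orig_twin.mpr hxw) (.cons adj_twin_root (.cons adj_root_twin
        (.cons (adj_twin_orig.mpr hyz.symm) .nil)))) (by simpa using hlen) hroot (by simp)
    simp at this

variable [Fintype V]

lemma _root_.IsGPSet.orig_notMem_of_adj_of_mem_doubled (hS : IsGPSet (Mycielskian G) S)
    (hz : z ∈ doubled S) (hzw : G.Adj z w) : orig w ∉ S :=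
  hS.notMem_of_adj_of_adj (mem_doubled.mp hz).1 (mem_doubled.mp hz).2 (by simp) (by simp)
    (by simpa) (by simpa using hzw.symm)

lemma _root_.IsGPSet.not_adj_of_mem_doubled (hS : IsGPSet (Mycielskian G) S)
    (hz : z ∈ doubled S) (ht : t ∈ doubled S) : ¬G.Adj z t := fun h =>
  hS.orig_notMem_of_adj_of_mem_doubled hz h (mem_doubled.mp ht).1

lemma _root_.IsGPSet.mem_missed_of_adj_of_adj (hS : IsGPSet (Mycielskian G) S)
    (hz : z ∈ doubled S) (ht : t ∈ doubled S) (hzt : z ≠ t) (hzw : G.Adj z w)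
    (htw : G.Adj t w) : w ∈ missed S := by
  have hnadj := hS.not_adj_of_mem_doubled hz ht
  rw [mem_doubled] at hz ht
  exact mem_missed.mpr ⟨hS.notMem_of_adj_of_adj hz.1 ht.1 (by simpa) (by simpa) (by simpa)
    (by simpa using htw.symm), hS.notMem_of_adj_of_adj hz.1 ht.1 (by simpa) (by simpa)
    (by simpa) (by simpa using htw.symm)⟩

lemma _root_.IsGPSet.exists_adj_adj_twin (hS : IsGPSet (Mycielskian G) S)
    (hz : z ∈ doubled S) (ht : t ∈ doubled S) (hzt : z ≠ t) (hx : twin x ∈ S) (hzx : G.Adj z x)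
    (hy : twin y ∈ S) (hty : G.Adj t y) : ∃ m, G.Adj z m ∧ G.Adj m y := by
  have hyz : z ≠ y := by
    rintro rfl
    exact hS.orig_notMem_of_adj_of_mem_doubled ht hty (mem_doubled.mp hz).1
  have hxy : x ≠ y := by
    rintro rfl
    exact (mem_missed.mp (hS.mem_missed_of_adj_of_adj hz ht hzt hzx hty)).2 hy
  exact exists_adj_adj_of_edist_le_two
    (hS.edist_le_two_of_twin_mem (mem_doubled.mp hz).1 hx hzx hy) hyz
    fun h => hxy (hS.eq_of_adj_of_adj_twin (mem_doubled.mp hz).1 hx hy hzx h)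

end MycielskianGP

section Cubic

variable [Fintype V] [DecidableRel G.Adj] {S : Set (Option (V ⊕ V))}

lemma _root_.IsGPSet.root_notMem (hS : IsGPSet (Mycielskian G) S) (hG : G ≠ ⊤)
    (hG3 : G.IsRegularOfDegree 3) (hcard : Fintype.card V + 1 ≤ S.ncard) : none ∉ S := by
  classical
  intro hroot
  have htwin : #(twinPart S) ≤ 1 := card_le_one.mpr fun x hx y hy => by
    by_contra hxy
    exact hS.root_notMem_of_twin_mem (mem_twinPart.mp hx) (mem_twinPart.mp hy) hxy hroot
  have hsum := ncard_le_card_origPart_add_card_twinPart_add_one (S := S)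
  rcases Nat.le_one_iff_eq_zero_or_eq_one.mp htwin with h0 | h1
  · have horig : origPart S = univ :=
      eq_univ_of_card _ (by have := card_le_univ (origPart S); omega)
    exact hS.root_notMem_of_forall_orig_mem (fun v => mem_origPart.mp (horig ▸ mem_univ v)) hG
      (fun v => (G.degree_pos_iff_exists_adj v).mp (by simp [hG3.degree_eq])) hroot
  · obtain ⟨x, hx⟩ := card_eq_one.mp h1
    have hdisj : Disjoint (origPart S) (G.neighborFinset x) := disjoint_right.mpr fun a ha haS =>
      hS.twin_notMem_of_root_mem (mem_origPart.mp haS) hroot ((mem_neighborFinset ..).mp ha).symm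
        (mem_twinPart.mp (hx ▸ mem_singleton_self x))
    have := card_union_of_disjoint hdisj
    have := card_le_univ (origPart S ∪ G.neighborFinset x)
    have := hG3.degree_eq x
    rw [← card_neighborFinset_eq_degree] at this
    omega

variable [DecidableEq V]

lemma card_filter_missed_adj_add_ite (hS : IsGPSet (Mycielskian G) S)
    (hG3 : G.IsRegularOfDegree 3) {z : V} (hz : z ∈ doubled S) :
    #{w ∈ missed S | G.Adj z w} + (if z ∈ linked S G then 1 else 0) = 3 := by
  have hmissed : {w ∈ missed S | G.Adj z w} = {w ∈ (twinPart S)ᶜ | G.Adj z w} := by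
    ext w
    by_cases hw : G.Adj z w <;> simp [hw, hS.orig_notMem_of_adj_of_mem_doubled hz]
  have htwin : #{w ∈ twinPart S | G.Adj z w} = if z ∈ linked S G then 1 else 0 := by
    have hle : #{w ∈ twinPart S | G.Adj z w} ≤ 1 := card_le_one.mpr fun x hx y hy => by
      simp only [mem_filter, mem_twinPart] at hx hy
      exact hS.eq_of_adj_of_adj_twin (mem_doubled.mp hz).1 hx.1 hy.1 hx.2 hy.2
    split_ifs with hl
    · obtain ⟨-, x, hx, hzx⟩ := mem_linked.mp hl
      exact le_antisymm hle (card_pos.mpr ⟨x, by simp_all⟩)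
    · exact card_eq_zero.mpr (filter_eq_empty_iff.mpr fun x hx hzx =>
        hl (mem_linked.mpr ⟨hz, x, mem_twinPart.mp hx, hzx⟩))
  rw [hmissed, ← htwin, add_comm, G.card_filter_adj_add_card_filter_compl_adj, hG3.degree_eq]

lemma sum_card_filter_missed_adj_add_card_linked (hS : IsGPSet (Mycielskian G) S)
    (hG3 : G.IsRegularOfDegree 3) :
    ∑ z ∈ doubled S, #{w ∈ missed S | G.Adj z w} + #(linked S G) = 3 * #(doubled S) := by
  have h := sum_congr rfl fun z hz => card_filter_missed_adj_add_ite hS hG3 (S := S) (z := z) hz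
  rwa [sum_add_distrib, sum_boole, Nat.cast_id, filter_mem_eq_inter,
    inter_eq_right.mpr linked_subset_doubled, sum_const, smul_eq_mul, mul_comm] at h

lemma sum_card_filter_compl_doubled_adj_add_three_le (hS : IsGPSet (Mycielskian G) S)
    (hG3 : G.IsRegularOfDegree 3) (hroot : none ∉ S) (hcard : Fintype.card V + 1 ≤ S.ncard) :
    ∑ d ∈ missed S, #{w ∈ (doubled S)ᶜ | G.Adj d w} + 3 ≤ #(linked S G) := by
  have h₁ := sum_card_filter_missed_adj_add_card_linked hS hG3
  have h₂ := hG3.sum_card_filter_adj_add_sum_card_filter_compl_adj (doubled S) (missed S)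
  have h₃ := card_missed_add_one_le_card_doubled hroot hcard
  omega

lemma exists_filter_missed_adj_eq_pair (hS : IsGPSet (Mycielskian G) S)
    (hG3 : G.IsRegularOfDegree 3) {z : V} (hz : z ∈ linked S G) :
    ∃ p q, p ≠ q ∧ {w ∈ missed S | G.Adj z w} = {p, q} := by
  have := card_filter_missed_adj_add_ite hS hG3 (linked_subset_doubled hz)
  rw [if_pos hz] at this
  exact card_eq_two.mp (by omega)

lemma eq_or_eq_or_eq_of_adj (hS : IsGPSet (Mycielskian G) S) {z x p q m : V}
    (hz : z ∈ doubled S) (hx : twin x ∈ S) (hzx : G.Adj z x)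
    (hpq : {w ∈ missed S | G.Adj z w} = {p, q}) (hzm : G.Adj z m) : m = x ∨ m = p ∨ m = q := by
  by_cases hm : twin m ∈ S
  · exact .inl (hS.eq_of_adj_of_adj_twin (mem_doubled.mp hz).1 hm hx hzm hzx)
  · have : m ∈ ({p, q} : Finset V) := hpq ▸ mem_filter.mpr
      ⟨mem_missed.mpr ⟨hS.orig_notMem_of_adj_of_mem_doubled hz hzm, hm⟩, hzm⟩
    exact .inr (by simpa using this)

/-- The twin-neighbours of the other linked vertices are pairwise distinct and lie within distance
two of `z`, hence among the neighbours of `x`, `p`, `q` outside `doubled S`. -/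
lemma card_linked_le (hS : IsGPSet (Mycielskian G) S) (hG3 : G.IsRegularOfDegree 3)
    {z x p q : V} (hz : z ∈ linked S G) (hx : twin x ∈ S) (hzx : G.Adj z x)
    (hpq : {w ∈ missed S | G.Adj z w} = {p, q}) :
    #(linked S G) ≤ 3 + #{w ∈ (doubled S)ᶜ | G.Adj p w} + #{w ∈ (doubled S)ᶜ | G.Adj q w} := by
  have hzC := linked_subset_doubled hz
  have key : #((linked S G).erase z) ≤ #((G.neighborFinset x).erase z ∪
      {w ∈ (doubled S)ᶜ | G.Adj p w} ∪ {w ∈ (doubled S)ᶜ | G.Adj q w}) := by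
    refine card_le_card_of_forall_subsingleton (fun t y => G.Adj t y ∧ twin y ∈ S) ?_ ?_
    · intro t ht
      obtain ⟨htz, ht⟩ := mem_erase.mp ht
      obtain ⟨htC, y, hy, hty⟩ := mem_linked.mp ht
      have hyA : orig y ∉ S := hS.orig_notMem_of_adj_of_mem_doubled htC hty
      have hyz : y ≠ z := fun h => hyA (h ▸ (mem_doubled.mp hzC).1)
      obtain ⟨m, hzm, hmy⟩ := hS.exists_adj_adj_twin hzC htC (Ne.symm htz) hx hzx hy hty
      refine ⟨y, ?_, hty, hy⟩
      rcases eq_or_eq_or_eq_of_adj hS hzC hx hzx hpq hzm with rfl | rfl | rfl <;>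
        simp [hmy, hyz, hyA]
    · intro y _ t₁ ht₁ t₂ ht₂
      simp only [Set.mem_ofPred_eq, mem_erase] at ht₁ ht₂
      by_contra h
      exact (mem_missed.mp (hS.mem_missed_of_adj_of_adj (linked_subset_doubled ht₁.1.2)
        (linked_subset_doubled ht₂.1.2) h ht₁.2.1 ht₂.2.1)).2 ht₁.2.2
  have hx2 : #((G.neighborFinset x).erase z) = 2 := by
    rw [card_erase_of_mem ((mem_neighborFinset ..).mpr hzx.symm), card_neighborFinset_eq_degree,
      hG3.degree_eq]
  grw [card_erase_of_mem hz, card_union_le, card_union_le, hx2] at key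
  omega

/-- Comparing `card_linked_le` at every linked vertex with the global count
`sum_card_filter_compl_doubled_adj_add_three_le`: a missed vertex with a neighbour outside
`doubled S` would have to be adjacent to every linked vertex, of which there are too many. -/
lemma mem_doubled_of_adj_of_mem_missed (hS : IsGPSet (Mycielskian G) S)
    (hG3 : G.IsRegularOfDegree 3) (hroot : none ∉ S) (hcard : Fintype.card V + 1 ≤ S.ncard)
    {d w : V} (hd : d ∈ missed S) (hdw : G.Adj d w) : w ∈ doubled S := by
  have hσ := sum_card_filter_compl_doubled_adj_add_three_le hS hG3 hroot hcard
  by_contra hw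
  have hd_pos : 0 < #{w ∈ (doubled S)ᶜ | G.Adj d w} := card_pos.mpr ⟨w, by simp [hw, hdw]⟩
  have hadj : ∀ z ∈ linked S G, G.Adj z d := by
    intro z hz
    obtain ⟨p, q, hpq, hD⟩ := exists_filter_missed_adj_eq_pair hS hG3 hz
    obtain ⟨-, x, hx, hzx⟩ := mem_linked.mp hz
    have hle := card_linked_le hS hG3 hz hx hzx hD
    have hp := mem_filter.mp (hD ▸ mem_insert_self p {q})
    have hq := mem_filter.mp (hD ▸ mem_insert_of_mem (mem_singleton_self q) : q ∈ _)
    by_contra hzd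
    have hdp : d ≠ p := by rintro rfl; exact hzd hp.2
    have hdq : d ≠ q := by rintro rfl; exact hzd hq.2
    have : ∑ e ∈ {p, q, d}, #{w ∈ (doubled S)ᶜ | G.Adj e w} ≤
        ∑ e ∈ missed S, #{w ∈ (doubled S)ᶜ | G.Adj e w} :=
      sum_le_sum_of_subset (by simp [insert_subset_iff, hp.1, hq.1, hd])
    rw [sum_insert (by simp [hpq, hdp.symm]), sum_pair hdq.symm] at this
    omega
  have hsub : linked S G ⊆ {w ∈ doubled S | G.Adj d w} := fun z hz =>
    mem_filter.mpr ⟨linked_subset_doubled hz, (hadj z hz).symm⟩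
  have := G.card_filter_adj_add_card_filter_compl_adj (doubled S) d
  rw [hG3.degree_eq] at this
  have := card_le_card hsub
  omega

lemma filter_compl_doubled_adj_eq_empty (hS : IsGPSet (Mycielskian G) S)
    (hG3 : G.IsRegularOfDegree 3) (hroot : none ∉ S) (hcard : Fintype.card V + 1 ≤ S.ncard)
    {d : V} (hd : d ∈ missed S) : {w ∈ (doubled S)ᶜ | G.Adj d w} = ∅ :=
  filter_eq_empty_iff.mpr fun _ hw hdw =>
    mem_compl.mp hw (mem_doubled_of_adj_of_mem_missed hS hG3 hroot hcard hd hdw)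

lemma card_linked_eq_three (hS : IsGPSet (Mycielskian G) S) (hG3 : G.IsRegularOfDegree 3)
    (hroot : none ∉ S) (hcard : Fintype.card V + 1 ≤ S.ncard) : #(linked S G) = 3 := by
  have hσ := sum_card_filter_compl_doubled_adj_add_three_le hS hG3 hroot hcard
  obtain ⟨z, hz⟩ : (linked S G).Nonempty := card_pos.mp (by omega)
  obtain ⟨p, q, -, hpq⟩ := exists_filter_missed_adj_eq_pair hS hG3 hz
  obtain ⟨-, x, hx, hzx⟩ := mem_linked.mp hz
  have hle := card_linked_le hS hG3 hz hx hzx hpq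
  rw [filter_compl_doubled_adj_eq_empty hS hG3 hroot hcard
      (mem_filter.mp (hpq ▸ mem_insert_self p {q})).1,
    filter_compl_doubled_adj_eq_empty hS hG3 hroot hcard
      (mem_filter.mp (hpq ▸ mem_insert_of_mem (mem_singleton_self q) : q ∈ _)).1] at hle
  simp only [card_empty] at hle
  omega

/-- A doubled vertex `t` without twin-neighbour is at distance three from the twin-neighbour `x`
of a linked vertex `u`, and the geodesic `t, d, u, x` passes through the original of `u`. -/
lemma linked_eq_doubled (hS : IsGPSet (Mycielskian G) S) (hG3 : G.IsRegularOfDegree 3)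
    (hroot : none ∉ S) (hcard : Fintype.card V + 1 ≤ S.ncard) : linked S G = doubled S := by
  refine linked_subset_doubled.antisymm fun t ht => ?_
  by_contra htl
  obtain ⟨u, hu⟩ : (linked S G).Nonempty :=
    card_pos.mp (by rw [card_linked_eq_three hS hG3 hroot hcard]; norm_num)
  obtain ⟨huC, x, hx, hux⟩ := mem_linked.mp hu
  have htu : u ≠ t := fun h => htl (h ▸ hu)
  obtain ⟨d, hud, hdt⟩ := exists_adj_adj_of_edist_le_two
    (hS.edist_le_two_of_twin_mem (mem_doubled.mp huC).1 hx hux (mem_doubled.mp ht).2) htu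
    (hS.not_adj_of_mem_doubled huC ht)
  have hxA : orig x ∉ S := hS.orig_notMem_of_adj_of_mem_doubled huC hux
  refine hS.orig_notMem_of_two_lt_edist (mem_doubled.mp ht).1 hx ?_ hdt.symm hud.symm hux
    (mem_doubled.mp huC).1
  refine two_lt_edist_iff.mpr ⟨fun h => hxA (h ▸ (mem_doubled.mp ht).1),
    fun h => htl (mem_linked.mpr ⟨ht, x, hx, h⟩), Set.eq_empty_of_forall_notMem fun m hm => ?_⟩
  rw [mem_commonNeighbors] at hm
  have hmD : m ∈ missed S := mem_missed.mpr ⟨hS.orig_notMem_of_adj_of_mem_doubled ht hm.1,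
    fun h => htl (mem_linked.mpr ⟨ht, m, h, hm.1⟩)⟩
  exact hxA (mem_doubled.mp (mem_doubled_of_adj_of_mem_missed hS hG3 hroot hcard hmD hm.2.symm)).1

lemma card_missed_eq_two (hS : IsGPSet (Mycielskian G) S) (hG3 : G.IsRegularOfDegree 3)
    (hroot : none ∉ S) (hcard : Fintype.card V + 1 ≤ S.ncard) : #(missed S) = 2 := by
  have h₁ := sum_card_filter_missed_adj_add_card_linked hS hG3
  have h₂ := hG3.sum_card_filter_adj_add_sum_card_filter_compl_adj (doubled S) (missed S)
  have h₃ : ∑ d ∈ missed S, #{w ∈ (doubled S)ᶜ | G.Adj d w} = 0 := sum_eq_zero fun d hd => by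
    rw [filter_compl_doubled_adj_eq_empty hS hG3 hroot hcard hd, card_empty]
  have h₄ := card_linked_eq_three hS hG3 hroot hcard
  rw [linked_eq_doubled hS hG3 hroot hcard] at h₁ h₄
  omega

lemma adj_of_mem_doubled_of_mem_missed (hS : IsGPSet (Mycielskian G) S)
    (hG3 : G.IsRegularOfDegree 3) (hroot : none ∉ S) (hcard : Fintype.card V + 1 ≤ S.ncard)
    {z d : V} (hz : z ∈ doubled S) (hd : d ∈ missed S) : G.Adj z d := by
  have := card_filter_missed_adj_add_ite hS hG3 hz
  rw [if_pos (by rwa [linked_eq_doubled hS hG3 hroot hcard])] at this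
  have heq : {w ∈ missed S | G.Adj z w} = missed S := eq_of_subset_of_card_le (filter_subset _ _)
    (by rw [card_missed_eq_two hS hG3 hroot hcard]; omega)
  exact (mem_filter.mp (heq ▸ hd)).2

lemma adj_of_adj_twin_of_adj_twin (hS : IsGPSet (Mycielskian G) S)
    (hG3 : G.IsRegularOfDegree 3) (hroot : none ∉ S) (hcard : Fintype.card V + 1 ≤ S.ncard)
    {z t x y : V} (hz : z ∈ doubled S) (ht : t ∈ doubled S) (hzt : z ≠ t) (hx : twin x ∈ S)
    (hzx : G.Adj z x) (hy : twin y ∈ S) (hty : G.Adj t y) : G.Adj x y := by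
  obtain ⟨m, hzm, hmy⟩ := hS.exists_adj_adj_twin hz ht hzt hx hzx hy hty
  by_cases hm : twin m ∈ S
  · rwa [hS.eq_of_adj_of_adj_twin (mem_doubled.mp hz).1 hx hm hzx hzm]
  · have hmD : m ∈ missed S := mem_missed.mpr ⟨hS.orig_notMem_of_adj_of_mem_doubled hz hzm, hm⟩
    exact absurd (mem_doubled.mp (mem_doubled_of_adj_of_mem_missed hS hG3 hroot hcard hmD
      hmy)).1 (hS.orig_notMem_of_adj_of_mem_doubled ht hty)

lemma reachable_of_mem_doubled (hS : IsGPSet (Mycielskian G) S) (hG3 : G.IsRegularOfDegree 3)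
    (hroot : none ∉ S) (hcard : Fintype.card V + 1 ≤ S.ncard) {z x : V} (hz : z ∈ doubled S)
    (hx : twin x ∈ S) (hzx : G.Adj z x) (y : V) : G.Reachable z y := by
  by_cases hy : orig y ∈ S
  · obtain ⟨w, hyw⟩ := (G.degree_pos_iff_exists_adj y).mp (by simp [hG3.degree_eq])
    exact reachable_of_edist_ne_top (ne_top_of_le_ne_top (by simp)
      (hS.edist_le_three_of_orig_mem (mem_doubled.mp hz).1 hx hzx hy hyw))
  by_cases hy' : twin y ∈ S
  · exact reachable_of_edist_ne_top (ne_top_of_le_ne_top (by simp)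
      (hS.edist_le_two_of_twin_mem (mem_doubled.mp hz).1 hx hzx hy'))
  · exact (adj_of_mem_doubled_of_mem_missed hS hG3 hroot hcard hz
      (mem_missed.mpr ⟨hy, hy'⟩)).reachable

theorem _root_.IsGPSet.nonempty_iso_gd_three (hS : IsGPSet (Mycielskian G) S) (hG : G ≠ ⊤)
    (hG3 : G.IsRegularOfDegree 3) (hcard : Fintype.card V + 1 ≤ S.ncard) :
    Nonempty (G ≃g Gd 3) := by
  have hroot := hS.root_notMem hG hG3 hcard
  have hlinked := linked_eq_doubled hS hG3 hroot hcard
  have hC : #(doubled S) = 3 := hlinked ▸ card_linked_eq_three hS hG3 hroot hcard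
  have hD : #(missed S) = 3 - 1 := card_missed_eq_two hS hG3 hroot hcard
  set U : Fin 3 → V := fun i => ((doubled S).equivFinOfCardEq hC).symm i
  set R : Fin (3 - 1) → V := fun k => ((missed S).equivFinOfCardEq hD).symm k
  have hU : ∀ i, U i ∈ doubled S := fun i => Subtype.prop _
  have hR : ∀ k, R k ∈ missed S := fun k => Subtype.prop _
  have hUinj : U.Injective := Subtype.val_injective.comp (Equiv.injective _)
  choose X hX hUX using fun i => (mem_linked.mp (hlinked ▸ hU i)).2
  have hinj : (Sum.elim U (Sum.elim X R)).Injective := by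
    refine hUinj.sumElim (Function.Injective.sumElim (fun i j hij => ?_)
      (Subtype.val_injective.comp (Equiv.injective _)) fun i k h => ?_) ?_
    · by_contra h
      exact (mem_missed.mp (hS.mem_missed_of_adj_of_adj (hU i) (hU j) (hUinj.ne h) (hUX i)
        (hij ▸ hUX j))).2 (hX i)
    · exact (mem_missed.mp (h ▸ hR k)).2 (hX i)
    · rintro i (j | k) h
      · exact hS.orig_notMem_of_adj_of_mem_doubled (hU j) (hUX j)
          ((congrArg orig h : orig (U i) = orig (X j)) ▸ (mem_doubled.mp (hU i)).1)
      · exact (mem_missed.mp ((h : U i = R k) ▸ hR k)).1 (mem_doubled.mp (hU i)).1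
  obtain ⟨e⟩ := (Gd.hom U X R hUX
    (fun i k => adj_of_mem_doubled_of_mem_missed hS hG3 hroot hcard (hU i) (hR k))
    (fun i j hij => adj_of_adj_twin_of_adj_twin hS hG3 hroot hcard (hU i) (hU j) (hUinj.ne hij)
      (hX i) (hUX i) (hX j) (hUX j))).nonempty_iso_of_injective hinj
    (fun a => by rw [hG3.degree_eq, Gd.degree_three]) (.inl 0)
    (reachable_of_mem_doubled hS hG3 hroot hcard (hU 0) (hX 0) (hUX 0))
  exact ⟨e.symm⟩

end Cubic

section Construction

variable {d : ℕ} {U X : Fin d → V} {r : V}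

def copies (U X : Fin d → V) : Fin d ⊕ Fin d ⊕ Fin d → Option (V ⊕ V) :=
  Sum.elim (orig ∘ U) (Sum.elim (twin ∘ U) (twin ∘ X))

lemma edist_copies_le_two (hUX : ∀ i j, G.Adj (U i) (X j) ↔ i = j)
    (hXX : ∀ i j, i ≠ j → G.Adj (X i) (X j)) (hUr : ∀ i, G.Adj (U i) r) (k l) :
    (Mycielskian G).edist (copies U X k) (copies U X l) ≤ 2 := by
  have hUXt : ∀ i j, (Mycielskian G).edist (orig (U i)) (twin (X j)) ≤ 2 := fun i j => by
    rcases eq_or_ne i j with rfl | hij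
    · exact (edist_eq_one_iff_adj.mpr (adj_orig_twin.mpr ((hUX i i).mpr rfl))).le.trans
        (by norm_num)
    · exact edist_orig_twin_le_two ((hUX i i).mpr rfl) (hXX i j hij)
  rcases k with i | i | i <;> rcases l with j | j | j <;>
    simp only [copies, Sum.elim_inl, Sum.elim_inr, Function.comp_apply]
  · exact edist_orig_orig_le_two (hUr i) (hUr j).symm
  · exact edist_orig_twin_le_two (hUr i) (hUr j).symm
  · exact hUXt i j
  · rw [edist_comm]; exact edist_orig_twin_le_two (hUr j) (hUr i).symm
  · exact edist_twin_twin_le_two _ _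
  · exact edist_twin_twin_le_two _ _
  · rw [edist_comm]; exact hUXt j i
  · exact edist_twin_twin_le_two _ _
  · exact edist_twin_twin_le_two _ _

lemma exists_forall_adj_copies_eq (hUU : ∀ i j, ¬G.Adj (U i) (U j))
    (hUX : ∀ i j, G.Adj (U i) (X j) ↔ i = j) (k) :
    ∃ c, ∀ l, (Mycielskian G).Adj (copies U X k) (copies U X l) → copies U X l = c := by
  rcases k with i | i | i
  · refine ⟨twin (X i), ?_⟩
    rintro (j | j | j) h <;> simp only [copies, Sum.elim_inl, Sum.elim_inr,
      Function.comp_apply, adj_orig_orig, adj_orig_twin, hUX] at h ⊢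
    exacts [(hUU i j h).elim, (hUU i j h).elim, h ▸ rfl]
  · refine ⟨none, ?_⟩
    rintro (j | j | j) h <;> simp only [copies, Sum.elim_inl, Sum.elim_inr,
      Function.comp_apply, adj_twin_orig, not_adj_twin_twin] at h
    exact (hUU j i (G.adj_symm h)).elim
  · refine ⟨orig (U i), ?_⟩
    rintro (j | j | j) h <;> simp only [copies, Sum.elim_inl, Sum.elim_inr,
      Function.comp_apply, adj_twin_orig, not_adj_twin_twin] at h
    rw [(hUX j i).mp h.symm]
    rfl

lemma isGPSet_range_copies (hUU : ∀ i j, ¬G.Adj (U i) (U j))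
    (hUX : ∀ i j, G.Adj (U i) (X j) ↔ i = j) (hXX : ∀ i j, i ≠ j → G.Adj (X i) (X j))
    (hUr : ∀ i, G.Adj (U i) r) : IsGPSet (Mycielskian G) (Set.range (copies U X)) := by
  refine .of_edist_le_two ?_ ?_
  · simpa only [Set.forall_mem_range] using edist_copies_le_two hUX hXX hUr
  · simp only [Set.forall_mem_range]
    intro k l₁ l₂ h₁ h₂
    obtain ⟨c, hc⟩ := exists_forall_adj_copies_eq hUU hUX k
    rw [hc l₁ h₁, hc l₂ h₂]

lemma copies_injective (hUU : ∀ i j, ¬G.Adj (U i) (U j))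
    (hUX : ∀ i j, G.Adj (U i) (X j) ↔ i = j) (hXX : ∀ i j, i ≠ j → G.Adj (X i) (X j)) :
    (copies U X).Injective := by
  have hU : U.Injective := fun i j h => ((hUX j i).mp (h ▸ (hUX i i).mpr rfl)).symm
  have hX : X.Injective := fun i j h => by
    by_contra hij
    exact (hXX i j hij).ne h
  have hUX' : ∀ i j, U i ≠ X j := fun i j h => hUU j i (h ▸ (hUX j j).mpr rfl)
  have hsome : (some : V ⊕ V → Option (V ⊕ V)).Injective := Option.some_injective _
  refine ((hsome.comp Sum.inl_injective).comp hU).sumElim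
    (((hsome.comp Sum.inr_injective).comp hU).sumElim ((hsome.comp Sum.inr_injective).comp hX)
      fun i j h => hUX' i j (by simpa using h)) ?_
  rintro i (j | j) <;> simp

lemma three_mul_le_gpNumber [Fintype V] (hUU : ∀ i j, ¬G.Adj (U i) (U j))
    (hUX : ∀ i j, G.Adj (U i) (X j) ↔ i = j) (hXX : ∀ i j, i ≠ j → G.Adj (X i) (X j))
    (hUr : ∀ i, G.Adj (U i) r) : 3 * d ≤ gpNumber (Mycielskian G) := by
  have := (isGPSet_range_copies hUU hUX hXX hUr).ncard_le_gpNumber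
  rw [Set.ncard_range_of_injective (copies_injective hUU hUX hXX)] at this
  simp only [Nat.card_eq_fintype_card, Fintype.card_sum, Fintype.card_fin] at this
  omega

end Construction

lemma _root_.SimpleGraph.Iso.card_add_one_le_gpNumber_mycielskian [Fintype V]
    (e : G ≃g Gd 3) : Fintype.card V + 1 ≤ gpNumber (Mycielskian G) := by
  have hcard : Fintype.card V = 8 := by simp [Fintype.card_congr e.toEquiv]
  have := three_mul_le_gpNumber (G := G) (U := fun i => e.symm (.inl i))
    (X := fun i => e.symm (.inr (.inl i))) (r := e.symm (.inr (.inr 0)))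
    (fun _ _ => e.symm.map_adj_iff.not.mpr Gd.not_adj_inl_inl)
    (fun _ _ => e.symm.map_adj_iff.trans Gd.adj_inl_inr_inl)
    (fun _ _ h => e.symm.map_adj_iff.mpr (Gd.adj_inr_inl_inr_inl.mpr h))
    (fun _ => e.symm.map_adj_iff.mpr Gd.adj_inl_inr_inr)
  omega

end Mycielskian

/-- A non-complete cubic graph `G` of order `n` satisfies
`gp(μ(G)) ≥ n + 1` if and only if `G` is isomorphic to the graph `G(3)`. -/
theorem gpNumber_mycielskian_cubic [Fintype V] (G : SimpleGraph V)
    (hne : G ≠ ⊤) (hreg : IsRegularDeg G 3) :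
    Fintype.card V + 1 ≤ gpNumber (Mycielskian G) ↔ Nonempty (G ≃g Gd 3) := by
  classical
  refine ⟨fun h => ?_, fun ⟨e⟩ => e.card_add_one_le_gpNumber_mycielskian⟩
  obtain ⟨S, hS, hcard⟩ := exists_isGPSet_ncard_eq_gpNumber (H := Mycielskian G)
  exact hS.nonempty_iso_gd_three hne hreg.isRegularOfDegree (hcard ▸ h)
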